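/- arXiv:2105.03524 — 5 statements merged into one kernel-verified Lean document; each statement's English description precedes it below -/
import Mathlib

section
/- Define the Somos-5 sequence over the rationals by a_0=a_1=a_2=a_3=a_4=1 and a_n = (a_{n-1}*a_{n-4} + a_{n-2}*a_{n-3})/a_{n-5} for n ≥ 5. Then every term a_n is a positive integer. -/
def somos5 : ℕ → ℚ
  | 0 => 1
  | 1 => 1
  | 2 => 1
  | 3 => 1
  | 4 => 1
  | n + 5 => (somos5 (n + 4) * somos5 (n + 1) + somos5 (n + 3) * somos5 (n + 2)) / somos5 n

/-!
Along any Somos-5 sequence the quantity `(a (n+4) * a n + a (n+2) ^ 2) / (a (n+3) * a (n+1))`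
is 2-periodic; for `somos5` it alternates between `2` and `3`. Consequently both `a (n+5) * a n`
and `a (n+5) * a (n+1)` are integer polynomials in earlier terms, so `a (n+5)` is an integer as
soon as `a n` and `a (n+1)` are coprime. The same relation, read as
`a (n+4) ^ 2 ≡ -a (n+2) * a (n+6) (mod a (n+5))`, shows that coprimality of consecutive terms
propagates.
-/

section Somos5Recurrence

variable {R : Type*} [CommRing R]

def IsSomos5 (a : ℕ → R) : Prop :=
  ∀ n, a (n + 5) * a n = a (n + 4) * a (n + 1) + a (n + 3) * a (n + 2)

def IsCoprimeOver (S : Subring R) (x y : R) : Prop :=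
  ∃ u ∈ S, ∃ v ∈ S, u * x + v * y = 1

variable {a : ℕ → R}

theorem IsSomos5.invariant_mul_eq (h : IsSomos5 a) (n : ℕ) :
    (a (n + 6) * a (n + 2) + a (n + 4) ^ 2) * a (n + 1)
      = (a (n + 4) * a n + a (n + 2) ^ 2) * a (n + 5) := by
  have h₁ : a (n + 6) * a (n + 1) = a (n + 5) * a (n + 2) + a (n + 4) * a (n + 3) := h (n + 1)
  linear_combination a (n + 2) * h₁ - a (n + 4) * h n

theorem IsSomos5.invariant_add_two [IsDomain R] (h : IsSomos5 a) {n : ℕ} {c : R}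
    (hne : a (n + 1) ≠ 0) (hc : a (n + 4) * a n + a (n + 2) ^ 2 = c * (a (n + 3) * a (n + 1))) :
    a (n + 6) * a (n + 2) + a (n + 4) ^ 2 = c * (a (n + 5) * a (n + 3)) :=
  mul_right_cancel₀ hne <| by linear_combination h.invariant_mul_eq n + a (n + 5) * hc

section Integrality

variable {R : Type*} [CommRing R] {S : Subring R}

theorem isCoprimeOver_one_left (y : R) : IsCoprimeOver S 1 y :=
  ⟨1, S.one_mem, 0, S.zero_mem, by ring⟩

theorem IsCoprimeOver.mem_of_mul_mem {p q x : R} (hpq : IsCoprimeOver S p q)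
    (hp : x * p ∈ S) (hq : x * q ∈ S) : x ∈ S := by
  obtain ⟨u, hu, v, hv, huv⟩ := hpq
  have hx : x = u * (x * p) + v * (x * q) := by linear_combination -x * huv
  rw [hx]
  exact S.add_mem (S.mul_mem hu hp) (S.mul_mem hv hq)

theorem IsCoprimeOver.of_sq_eq {x y z s t : R} (hxy : IsCoprimeOver S x y) (hy : y ∈ S)
    (hs : s ∈ S) (ht : t ∈ S) (hx : x ^ 2 = s * y + t * z) : IsCoprimeOver S y z := by
  obtain ⟨u, hu, v, hv, huv⟩ := hxy
  refine ⟨u ^ 2 * s + 2 * v - v ^ 2 * y, ?_, u ^ 2 * t, ?_, ?_⟩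
  · exact S.sub_mem (S.add_mem (S.mul_mem (S.pow_mem hu 2) hs) (S.mul_mem (natCast_mem S 2) hv))
      (S.mul_mem (S.pow_mem hv 2) hy)
  · exact S.mul_mem (S.pow_mem hu 2) ht
  · linear_combination (u * x - v * y + 1) * huv - u ^ 2 * hx

variable {a : ℕ → R}

theorem IsSomos5.mem_and_isCoprimeOver (h : IsSomos5 a) {c : ℕ → R} (hc : ∀ n, c n ∈ S)
    (hinv : ∀ n, a (n + 4) * a n + a (n + 2) ^ 2 = c n * (a (n + 3) * a (n + 1)))
    (hbase : ∀ n < 5, a n ∈ S ∧ IsCoprimeOver S (a n) (a (n + 1))) (n : ℕ) :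
    a n ∈ S ∧ IsCoprimeOver S (a n) (a (n + 1)) := by
  induction n using Nat.strong_induction_on with
  | _ n ih =>
  rcases lt_or_ge n 5 with hn | hn
  · exact hbase n hn
  obtain ⟨m, rfl⟩ := Nat.exists_eq_add_of_le' hn
  have mem (k : ℕ) (hk : k < 5) : a (m + k) ∈ S := (ih (m + k) (by omega)).1
  have h₅ : a (m + 5) ∈ S := by
    refine (ih m (by omega)).2.mem_of_mul_mem (p := a m) (q := a (m + 1)) ?_ ?_
    · rw [h m]
      exact S.add_mem (S.mul_mem (mem 4 (by omega)) (mem 1 (by omega)))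
        (S.mul_mem (mem 3 (by omega)) (mem 2 (by omega)))
    · have hinv₁ : a (m + 5) * a (m + 1) + a (m + 3) ^ 2 = c (m + 1) * (a (m + 4) * a (m + 2)) :=
        hinv (m + 1)
      rw [eq_sub_of_add_eq hinv₁]
      exact S.sub_mem (S.mul_mem (hc _) (S.mul_mem (mem 4 (by omega)) (mem 2 (by omega))))
        (S.pow_mem (mem 3 (by omega)) 2)
  refine ⟨h₅, (ih (m + 4) (by omega)).2.of_sq_eq h₅
    (S.mul_mem (hc (m + 2)) (mem 3 (by omega))) (S.neg_mem (mem 2 (by omega))) ?_⟩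
  have hinv₂ : a (m + 6) * a (m + 2) + a (m + 4) ^ 2 = c (m + 2) * (a (m + 5) * a (m + 3)) :=
    hinv (m + 2)
  linear_combination hinv₂

end Integrality

theorem somos5_pos (n : ℕ) : 0 < somos5 n := by
  induction n using Nat.strong_induction_on with
  | _ n ih =>
  match n with
  | 0 | 1 | 2 | 3 | 4 => norm_num [somos5]
  | n + 5 =>
    have := ih n (by omega)
    have := ih (n + 1) (by omega)
    have := ih (n + 2) (by omega)
    have := ih (n + 3) (by omega)
    have := ih (n + 4) (by omega)
    rw [somos5]
    positivity

theorem isSomos5_somos5 : IsSomos5 somos5 := fun n => by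
  rw [somos5, div_mul_cancel₀ _ (somos5_pos n).ne']

theorem somos5_invariant (n : ℕ) :
    somos5 (n + 4) * somos5 n + somos5 (n + 2) ^ 2
      = ((2 + n % 2 : ℕ) : ℚ) * (somos5 (n + 3) * somos5 (n + 1)) := by
  induction n using Nat.twoStepInduction with
  | zero | one => norm_num [somos5]
  | more n ih _ =>
    rw [Nat.add_mod_right]
    exact isSomos5_somos5.invariant_add_two (somos5_pos _).ne' ih

theorem somos5_mem_bot (n : ℕ) : somos5 n ∈ (⊥ : Subring ℚ) :=
  (isSomos5_somos5.mem_and_isCoprimeOver (fun _ => natCast_mem _ _) somos5_invariant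
    (fun n hn => by interval_cases n <;> simp [somos5, isCoprimeOver_one_left]) n).1

theorem stmt4 : ∀ n : ℕ, ∃ k : ℕ, 0 < k ∧ somos5 n = (k : ℚ) := by
  intro n
  obtain ⟨z, hz⟩ := Subring.mem_bot.mp (somos5_mem_bot n)
  have hpos : (0 : ℚ) < z := hz ▸ somos5_pos n
  lift z to ℕ using by exact_mod_cast hpos.le
  exact ⟨z, by exact_mod_cast hpos, by exact_mod_cast hz.symm⟩
end Somos5Recurrence
end

section
/- Let (a_n) be an integer-valued sequence satisfying a_{n+5}*a_n = a_{n+4}*a_{n+1} + a_{n+3}*a_{n+2} for all n, with a_0=...=a_4=1. Then for every n ≥ 1, gcd(a_n, a_{n-1}) = 1. -/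
/-!
Coprimality propagates along the Somos-5 recurrence: if the five terms of a window are pairwise
coprime, each of the four newest is coprime to one product on the right of
`a (n + 5) * a n = a (n + 4) * a (n + 1) + a (n + 3) * a (n + 2)` and divides the other, hence is
coprime to `a (n + 5)`. Starting from the window of ones, any two terms at distance at most four
are coprime, in particular consecutive ones.
-/

theorem IsCoprime.of_mul_eq_add_of_dvd {R : Type*} [CommRing R] {c x y u v : R}
    (hv : IsCoprime c v) (hu : c ∣ u) (h : x * y = u + v) : IsCoprime c x := by
  obtain ⟨d, rfl⟩ := hu
  have hxy : IsCoprime c (x * y) := by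
    rw [h, add_comm]
    exact hv.add_mul_left_right d
  exact hxy.of_mul_right_left

theorem isCoprime_of_somos5 {R : Type*} [CommRing R] (a : ℕ → R)
    (hinit : ∀ i j, i < j → j ≤ 4 → IsCoprime (a i) (a j))
    (hrec : ∀ n, a (n + 5) * a n = a (n + 4) * a (n + 1) + a (n + 3) * a (n + 2)) :
    ∀ j i, i < j → j ≤ i + 4 → IsCoprime (a i) (a j) := by
  intro j
  induction j using Nat.strong_induction_on with
  | _ j ih =>
  intro i hij hji
  rcases Nat.lt_or_ge j 5 with hj | hj
  · exact hinit i j hij (by omega)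
  obtain ⟨n, rfl⟩ : ∃ n, j = n + 5 := ⟨j - 5, by omega⟩
  have hwin : ∀ k l, n + 1 ≤ k ∧ k < l ∧ l ≤ n + 4 → IsCoprime (a k) (a l) :=
    fun k l hkl => ih l (by omega) k hkl.2.1 (by omega)
  have hrec' := (hrec n).trans (add_comm _ _)
  obtain rfl | rfl | rfl | rfl : i = n + 1 ∨ i = n + 2 ∨ i = n + 3 ∨ i = n + 4 := by omega
  · exact ((hwin (n + 1) (n + 3) (by omega)).mul_right (hwin (n + 1) (n + 2) (by omega)))
      |>.of_mul_eq_add_of_dvd (dvd_mul_left _ _) (hrec n)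
  · exact ((hwin (n + 2) (n + 4) (by omega)).mul_right (hwin (n + 1) (n + 2) (by omega)).symm)
      |>.of_mul_eq_add_of_dvd (dvd_mul_left _ _) hrec'
  · exact ((hwin (n + 3) (n + 4) (by omega)).mul_right (hwin (n + 1) (n + 3) (by omega)).symm)
      |>.of_mul_eq_add_of_dvd (dvd_mul_right _ _) hrec'
  · exact ((hwin (n + 3) (n + 4) (by omega)).symm.mul_right (hwin (n + 2) (n + 4) (by omega)).symm)
      |>.of_mul_eq_add_of_dvd (dvd_mul_right _ _) (hrec n)

theorem stmt5 (a : ℕ → ℤ) (hinit : ∀ i ≤ 4, a i = 1)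
    (hrec : ∀ n, a (n + 5) * a n = a (n + 4) * a (n + 1) + a (n + 3) * a (n + 2)) :
    ∀ n ≥ 1, Int.gcd (a n) (a (n - 1)) = 1 := by
  have hcop := isCoprime_of_somos5 a
    (fun i j hij hj => by rw [hinit i (by omega), hinit j hj]; exact isCoprime_one_left) hrec
  intro n hn
  exact Int.isCoprime_iff_gcd_eq_one.mp (hcop n (n - 1) (by omega) (by omega)).symm
end

section
/- Let (a_n) be the Somos-5 sequence. Then for every n ≥ 2, gcd(a_n, a_{n-2}) = 1. -/
/-! Every five consecutive terms are pairwise coprime. Shifting the window by one brings in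
`a (n+5)` through `a (n+5) * a n = a (n+4) * a (n+1) + a (n+3) * a (n+2)`: each of
`a (n+1), …, a (n+4)` divides one summand and is coprime to the other, hence is coprime to
`a (n+5) * a n`. -/

section Somos5

variable {R : Type*} [CommRing R]

theorem IsCoprime.of_mul_eq_add {x s t p q : R} (hq : IsCoprime x q) (hp : x ∣ p)
    (h : s * t = p + q) : IsCoprime x s := by
  obtain ⟨c, rfl⟩ := hp
  have : IsCoprime x (s * t) := by
    rw [h, add_comm]
    exact hq.add_mul_left_right c
  exact this.of_mul_right_left

def FiveTermsCoprime (a : ℕ → R) (n : ℕ) : Prop :=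
  ∀ i j, i < j → j ≤ 4 → IsCoprime (a (n + i)) (a (n + j))

variable {a : ℕ → R}

theorem FiveTermsCoprime.succ
    (hrec : ∀ n, a (n + 5) * a n = a (n + 4) * a (n + 1) + a (n + 3) * a (n + 2))
    {n : ℕ} (h : FiveTermsCoprime a n) : FiveTermsCoprime a (n + 1) := by
  have coprime (i j : ℕ) (hij : i < j := by omega) (hj : j ≤ 4 := by omega) :
      IsCoprime (a (n + i)) (a (n + j)) := h i j hij hj
  have hrec_swap := (hrec n).trans (add_comm _ _)
  intro i j hij hj
  rw [add_right_comm, add_right_comm n 1 j]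
  obtain hj | rfl : j < 4 ∨ j = 4 := by omega
  · exact h (i + 1) (j + 1) (by omega) (by omega)
  interval_cases i
  · exact ((coprime 1 3).mul_right (coprime 1 2)).of_mul_eq_add (dvd_mul_left _ _) (hrec n)
  · exact ((coprime 2 4).mul_right (coprime 1 2).symm)
      |>.of_mul_eq_add (dvd_mul_left _ _) hrec_swap
  · exact ((coprime 3 4).mul_right (coprime 1 3).symm)
      |>.of_mul_eq_add (dvd_mul_right _ _) hrec_swap
  · exact ((coprime 3 4).symm.mul_right (coprime 2 4).symm)
      |>.of_mul_eq_add (dvd_mul_right _ _) (hrec n)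

theorem fiveTermsCoprime_of_somos5
    (hrec : ∀ n, a (n + 5) * a n = a (n + 4) * a (n + 1) + a (n + 3) * a (n + 2))
    (h0 : FiveTermsCoprime a 0) (n : ℕ) : FiveTermsCoprime a n := by
  induction n with
  | zero => exact h0
  | succ n ih => exact ih.succ hrec

end Somos5

theorem stmt6 (a : ℕ → ℤ) (hinit : ∀ i ≤ 4, a i = 1)
    (hrec : ∀ n, a (n + 5) * a n = a (n + 4) * a (n + 1) + a (n + 3) * a (n + 2)) :
    ∀ n ≥ 2, Int.gcd (a n) (a (n - 2)) = 1 := by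
  have h0 : FiveTermsCoprime a 0 := fun i j _ hj => by
    rw [zero_add, zero_add, hinit i (by omega), hinit j hj]
    exact isCoprime_one_left
  intro n hn
  obtain ⟨m, rfl⟩ := Nat.exists_eq_add_of_le' hn
  rw [Nat.add_sub_cancel, ← Int.isCoprime_iff_gcd_eq_one]
  exact (fiveTermsCoprime_of_somos5 hrec h0 m 0 2 two_pos (by norm_num)).symm
end

section
/- Let (a_n) be the Somos-5 sequence. Then for every n ≥ 3, gcd(a_n, a_{n-3}) = 1. -/
/-!
Every term of the Somos-5 sequence is coprime to each of the three terms before it. By induction: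
writing the recurrence as `a (n+6) * a (n+1) = a (n+5) * a (n+2) + a (n+4) * a (n+3)`, each of
`a (n+5)`, `a (n+4)`, `a (n+3)` appears in one summand and is coprime to the product forming the
other, hence coprime to `a (n+6) * a (n+1)` and so to `a (n+6)`.
-/

theorem IsCoprime.of_mul_eq_add_mul {R : Type*} [CommRing R] {p q r s x y : R}
    (hq : IsCoprime p q) (hr : IsCoprime p r) (h : x * y = q * r + p * s) : IsCoprime x p := by
  have : IsCoprime p (x * y) := h ▸ (hq.mul_right hr).add_mul_left_right s
  exact this.of_mul_right_left.symm

namespace Somos5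

def CoprimeToPrevThree {R : Type*} [CommRing R] (a : ℕ → R) (n : ℕ) : Prop :=
  IsCoprime (a (n + 3)) (a (n + 2)) ∧ IsCoprime (a (n + 3)) (a (n + 1)) ∧
    IsCoprime (a (n + 3)) (a n)

variable {R : Type*} [CommRing R] {a : ℕ → R}

theorem coprimeToPrevThree_add_three
    (hrec : ∀ n, a (n + 5) * a n = a (n + 4) * a (n + 1) + a (n + 3) * a (n + 2)) {n : ℕ}
    (h0 : CoprimeToPrevThree a n) (h1 : CoprimeToPrevThree a (n + 1))
    (h2 : CoprimeToPrevThree a (n + 2)) : CoprimeToPrevThree a (n + 3) := by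
  have hrec' : a (n + 3 + 3) * a (n + 1) = a (n + 5) * a (n + 2) + a (n + 4) * a (n + 3) :=
    hrec (n + 1)
  refine ⟨?_, ?_, ?_⟩
  · refine IsCoprime.of_mul_eq_add_mul (y := a (n + 1)) (s := a (n + 2)) h2.1 h2.2.1 ?_
    linear_combination hrec'
  · refine IsCoprime.of_mul_eq_add_mul (y := a (n + 1)) (s := a (n + 3)) h2.1.symm h1.2.1 ?_
    linear_combination hrec'
  · refine IsCoprime.of_mul_eq_add_mul (y := a (n + 1)) (s := a (n + 4)) h2.2.1.symm h0.1 ?_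
    linear_combination hrec'

theorem coprimeToPrevThree_of_recurrence
    (hrec : ∀ n, a (n + 5) * a n = a (n + 4) * a (n + 1) + a (n + 3) * a (n + 2))
    (h0 : CoprimeToPrevThree a 0) (h1 : CoprimeToPrevThree a 1) (h2 : CoprimeToPrevThree a 2)
    (n : ℕ) : CoprimeToPrevThree a n := by
  suffices ∀ n, CoprimeToPrevThree a n ∧ CoprimeToPrevThree a (n + 1) ∧
      CoprimeToPrevThree a (n + 2) from (this n).1
  intro n
  induction n with
  | zero => exact ⟨h0, h1, h2⟩
  | succ n ih => exact ⟨ih.2.1, ih.2.2, coprimeToPrevThree_add_three hrec ih.1 ih.2.1 ih.2.2⟩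

end Somos5

open Somos5 in
theorem stmt7 (a : ℕ → ℤ) (hinit : ∀ i ≤ 4, a i = 1)
    (hrec : ∀ n, a (n + 5) * a n = a (n + 4) * a (n + 1) + a (n + 3) * a (n + 2)) :
    ∀ n ≥ 3, Int.gcd (a n) (a (n - 3)) = 1 := by
  have hbase (n : ℕ) (hn : n ≤ 2) : CoprimeToPrevThree a n := by
    simp only [CoprimeToPrevThree, hinit n (by omega), hinit (n + 1) (by omega),
      hinit (n + 2) (by omega), isCoprime_one_right, and_self]
  intro n hn
  obtain ⟨m, rfl⟩ : ∃ m, n = m + 3 := ⟨n - 3, by omega⟩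
  rw [Nat.add_sub_cancel, ← Int.isCoprime_iff_gcd_eq_one]
  exact (coprimeToPrevThree_of_recurrence hrec (hbase 0 (by omega)) (hbase 1 (by omega))
    (hbase 2 (by omega)) m).2.2
end

section
/- Let (a_n) be the Somos-5 sequence. Then for every n ≥ 4, gcd(a_n, a_{n-4}) = 1, i.e., every term is coprime to each of its four predecessors. -/
/-!
Coprimality propagates along the recurrence: if `a (n+5)` and `a k` (`n+1 ≤ k ≤ n+4`) had a
common prime factor, then, since `a k` divides one of the two products on the right of
`a (n+5) * a n = a (n+4) * a (n+1) + a (n+3) * a (n+2)`, it would share that factor with the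
other product, i.e. with a term at distance at most three from it. Strong induction on the
larger index, starting from the unit initial terms, gives coprimality at all distances up to four.
-/

variable {R : Type*} [CommRing R]

theorem IsCoprime.of_mul_eq_mul_add_mul {c d e f g h : R} (hcd : IsCoprime c d)
    (hce : IsCoprime c e) (hrel : f * g = c * h + d * e) : IsCoprime c f := by
  have hsum : IsCoprime c (d * e + c * h) := (hcd.mul_right hce).add_mul_left_right h
  rw [add_comm, ← hrel] at hsum
  exact hsum.of_mul_right_left

theorem somos5_isCoprime_of_le_add_four (a : ℕ → R) (hinit : ∀ i ≤ 4, a i = 1)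
    (hrec : ∀ n, a (n + 5) * a n = a (n + 4) * a (n + 1) + a (n + 3) * a (n + 2)) :
    ∀ j i, i < j → j ≤ i + 4 → IsCoprime (a i) (a j) := by
  intro j
  induction j using Nat.strong_induction_on with
  | _ j ih =>
    intro i hij hji
    rcases Nat.lt_or_ge j 5 with hj | hj
    · rw [hinit j (by omega)]
      exact isCoprime_one_right
    obtain ⟨n, rfl⟩ := Nat.exists_eq_add_of_le' hj
    have h12 : IsCoprime (a (n + 1)) (a (n + 2)) := ih _ (by omega) _ (by omega) (by omega)
    have h13 : IsCoprime (a (n + 1)) (a (n + 3)) := ih _ (by omega) _ (by omega) (by omega)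
    have h24 : IsCoprime (a (n + 2)) (a (n + 4)) := ih _ (by omega) _ (by omega) (by omega)
    have h34 : IsCoprime (a (n + 3)) (a (n + 4)) := ih _ (by omega) _ (by omega) (by omega)
    obtain rfl | rfl | rfl | rfl : i = n + 1 ∨ i = n + 2 ∨ i = n + 3 ∨ i = n + 4 := by omega
    · exact .of_mul_eq_mul_add_mul (g := a n) (h := a (n + 4)) h13 h12
        (by linear_combination hrec n)
    · exact .of_mul_eq_mul_add_mul (g := a n) (h := a (n + 3)) h24 h12.symm
        (by linear_combination hrec n)
    · exact .of_mul_eq_mul_add_mul (g := a n) (h := a (n + 2)) h34 h13.symm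
        (by linear_combination hrec n)
    · exact .of_mul_eq_mul_add_mul h34.symm h24.symm (hrec n)

theorem stmt8 (a : ℕ → ℤ) (hinit : ∀ i ≤ 4, a i = 1)
    (hrec : ∀ n, a (n + 5) * a n = a (n + 4) * a (n + 1) + a (n + 3) * a (n + 2)) :
    ∀ n ≥ 4, Int.gcd (a n) (a (n - 4)) = 1 := by
  intro n hn
  rw [← Int.isCoprime_iff_gcd_eq_one]
  exact (somos5_isCoprime_of_le_add_four a hinit hrec n (n - 4) (by omega) (by omega)).symm
end
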